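/- The function α : (0, ln 2] → ℝ defined by α(ξ) = (1/ξ)(1/2 − √(h^{−1}(ln 2 − ξ)·(1 − h^{−1}(ln 2 − ξ)))) is monotone increasing on (0, ln 2]. -/

import Mathlib

noncomputable section

open scoped Matrix ComplexOrder

/-- The algebra of operators on `(ℂ²)^{⊗ n}`, as `2^n × 2^n` matrices indexed by `Fin n → Fin 2`. -/
abbrev Mq (n : ℕ) := Matrix (Fin n → Fin 2) (Fin n → Fin 2) ℂ

/-- Normalized trace `τ(X) = 2^{-n} tr X`. -/
def qTau {n : ℕ} (X : Mq n) : ℂ := ((2 : ℂ) ^ n)⁻¹ * X.trace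

/-- Real part of the normalized trace. -/
def qTauR {n : ℕ} (X : Mq n) : ℝ := (qTau X).re

/-- Normalized Hilbert–Schmidt inner product `⟨X, Y⟩ = τ(X† Y)`. -/
def qInner {n : ℕ} (X Y : Mq n) : ℂ := qTau (Xᴴ * Y)

/-- `|X| = √(X† X)`. -/
def mAbs {n : ℕ} (X : Mq n) : Mq n :=
  (Matrix.posSemidef_conjTranspose_mul_self X).1.eigenvectorUnitary.1 *
    Matrix.diagonal ((↑) ∘ (√·) ∘ (Matrix.posSemidef_conjTranspose_mul_self X).1.eigenvalues) *
    (star (Matrix.posSemidef_conjTranspose_mul_self X).1.eigenvectorUnitary : Mq n)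

/-- The entropy `Ent(X) = τ(X ln X) − τ(X) ln τ(X)` (with the convention `0 ln 0 = 0`),
for positive semidefinite `X`, via the continuous functional calculus. -/
def mEnt {n : ℕ} (X : Mq n) : ℝ :=
  qTauR (cfc (fun x : ℝ => x * Real.log x) X) - qTauR X * Real.log (qTauR X)

/-- Real powers `X^p` of a positive semidefinite matrix, by functional calculus on the
support (`0 ^ p = 0` for `p ≠ 0`). -/
def mPow {n : ℕ} (X : Mq n) (p : ℝ) : Mq n := cfc (fun x : ℝ => x ^ p) X

/-- Normalized Schatten `p`-norm `‖X‖_p = (τ(|X|^p))^{1/p}`. -/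
def schatten {n : ℕ} (p : ℝ) (X : Mq n) : ℝ := qTauR (mPow (mAbs X) p) ^ (1 / p)

/-- Conditional expectation onto the `i`-th qubit being maximally mixed:
`E_i = I^{⊗(i-1)} ⊗ (τ(·) I) ⊗ I^{⊗(n-i)}`. -/
def condExpQ {n : ℕ} (i : Fin n) (X : Mq n) : Mq n :=
  Matrix.of fun a b =>
    if a i = b i then
      (2 : ℂ)⁻¹ * ∑ c : Fin 2, X (Function.update a i c) (Function.update b i c)
    else 0

/-- The Lindblad generator `K_n = Σ_i L̂_i`, where `L̂_i` acts as `L(X) = X − τ(X) I`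
on the `i`-th tensor factor. -/
def Kq (n : ℕ) (X : Mq n) : Mq n := ∑ i : Fin n, (X - condExpQ i X)

/-- The depolarizing channel on the `i`-th qubit:
`e^{-t} X + (1 - e^{-t}) τ_i(X) ⊗ I_i`. -/
def depolStep {n : ℕ} (t : ℝ) (i : Fin n) (X : Mq n) : Mq n :=
  (Real.exp (-t) : ℂ) • X + ((1 : ℂ) - (Real.exp (-t) : ℂ)) • condExpQ i X

/-- `Ψ_t^{⊗ n}`: the `n`-fold tensor power of the qubit depolarizing channel, i.e. the
composition over all qubits `i` of the depolarizing channel acting on the `i`-th factor. -/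
def psiDep {n : ℕ} (t : ℝ) (X : Mq n) : Mq n :=
  (List.finRange n).foldr (fun i Y => depolStep t i Y) X

/-- The binary entropy function `h(s) = −s ln s − (1−s) ln(1−s)`. -/
def binEnt (s : ℝ) : ℝ := -(s * Real.log s) - (1 - s) * Real.log (1 - s)

/-- `h⁻¹ : [0, ln 2] → [0, 1/2]`, the inverse of the restriction of the binary entropy
function to `[0, 1/2]`. -/
def binEntInv (y : ℝ) : ℝ := Function.invFunOn binEnt (Set.Icc 0 (1 / 2)) y

/-- `φ(ξ) = 1/2 − √(h⁻¹(ln 2 − ξ)(1 − h⁻¹(ln 2 − ξ)))`. -/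
def phiF (ξ : ℝ) : ℝ :=
  1 / 2 - Real.sqrt (binEntInv (Real.log 2 - ξ) * (1 - binEntInv (Real.log 2 - ξ)))

/-- `α(ξ) = φ(ξ)/ξ` for `ξ ∈ (0, ln 2]`, with `α(0) = 1/2` by continuous extension. -/
def alphaF (ξ : ℝ) : ℝ := if ξ = 0 then 1 / 2 else ξ⁻¹ * phiF ξ

/-! Substituting `u = 1 - 2 h⁻¹(ln 2 - ξ)`, which increases with `ξ` and maps `(0, ln 2]` onto
`(0, 1]`, turns `α` into `f(u) / g(u)` with `f(u) = 1 - √(1 - u²)` and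
`g(u) = 2 (ln 2 - h((1 - u) / 2))`, both vanishing at `0`. For `u = tanh y` the ratio of
derivatives is `f'(u) / g'(u) = sinh y / (2 y)`, which increases with `y`, so `f / g` increases
by the monotone form of L'Hôpital's rule (Cauchy's mean value theorem on `[0, u]` and `[u, v]`). -/

open Real Set

theorem monotoneOn_div_of_monotoneOn_deriv_div {f g f' g' : ℝ → ℝ} {a b : ℝ}
    (hf : ContinuousOn f (Icc a b)) (hg : ContinuousOn g (Icc a b))
    (hff' : ∀ x ∈ Ioo a b, HasDerivAt f (f' x) x)
    (hgg' : ∀ x ∈ Ioo a b, HasDerivAt g (g' x) x)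
    (hg'_pos : ∀ x ∈ Ioo a b, 0 < g' x) (hfa : f a = 0) (hga : g a = 0)
    (hmono : MonotoneOn (fun x => f' x / g' x) (Ioo a b)) :
    MonotoneOn (fun x => f x / g x) (Ioc a b) := by
  intro u hu v hv huv
  rcases huv.eq_or_lt with rfl | huv
  · rfl
  have hg_mono : StrictMonoOn g (Icc a b) :=
    strictMonoOn_of_hasDerivWithinAt_pos (convex_Icc a b) hg
      (fun x hx => (hgg' x (by rwa [interior_Icc] at hx)).hasDerivWithinAt)
      (fun x hx => hg'_pos x (by rwa [interior_Icc] at hx))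
  have hu_mem : u ∈ Icc a b := Ioc_subset_Icc_self hu
  have hgu : 0 < g u := hga ▸ hg_mono (left_mem_Icc.2 (hu.1.le.trans hu.2)) hu_mem hu.1
  have hguv : 0 < g v - g u := sub_pos.2 (hg_mono hu_mem (Ioc_subset_Icc_self hv) huv)
  have hau : Ioo a u ⊆ Ioo a b := Ioo_subset_Ioo_right hu.2
  have huv_sub : Ioo u v ⊆ Ioo a b := Ioo_subset_Ioo hu.1.le hv.2
  -- Cauchy's mean value theorem on `[a, u]` and on `[u, v]`
  obtain ⟨c, hc, hc_eq⟩ := exists_ratio_hasDerivAt_eq_ratio_slope f f' hu.1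
    (hf.mono (Icc_subset_Icc_right hu.2)) (fun x hx => hff' x (hau hx))
    g g' (hg.mono (Icc_subset_Icc_right hu.2)) (fun x hx => hgg' x (hau hx))
  obtain ⟨d, hd, hd_eq⟩ := exists_ratio_hasDerivAt_eq_ratio_slope f f' huv
    (hf.mono (Icc_subset_Icc hu.1.le hv.2)) (fun x hx => hff' x (huv_sub hx))
    g g' (hg.mono (Icc_subset_Icc hu.1.le hv.2)) (fun x hx => hgg' x (huv_sub hx))
  have hc_mem : c ∈ Ioo a b := hau hc
  have hd_mem : d ∈ Ioo a b := huv_sub hd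
  rw [hfa, hga, sub_zero, sub_zero] at hc_eq
  have hslope : f u / g u ≤ (f v - f u) / (g v - g u) :=
    calc f u / g u = f' c / g' c := by
          rw [div_eq_div_iff hgu.ne' (hg'_pos c hc_mem).ne']; linarith
      _ ≤ f' d / g' d := hmono hc_mem hd_mem (hc.2.trans hd.1).le
      _ = (f v - f u) / (g v - g u) := by
          rw [div_eq_div_iff (hg'_pos d hd_mem).ne' hguv.ne']; linarith
  rw [div_le_div_iff₀ hgu hguv] at hslope
  show f u / g u ≤ f v / g v
  rw [div_le_div_iff₀ hgu (by linarith)]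
  linear_combination hslope

theorem monotoneOn_sinh_div_self : MonotoneOn (fun y => sinh y / y) (Ioi 0) := by
  intro x hx y hy hxy
  refine monotoneOn_div_of_monotoneOn_deriv_div (f' := cosh) (g' := fun _ => 1)
    continuous_sinh.continuousOn continuous_id.continuousOn (fun t _ => hasDerivAt_sinh t)
    (fun t _ => hasDerivAt_id t) (fun _ _ => one_pos) sinh_zero rfl ?_
    ⟨hx, hxy⟩ ⟨hy, le_rfl⟩ hxy
  intro s hs t ht hst
  simpa [cosh_le_cosh, abs_of_pos hs.1, abs_of_pos ht.1] using hst

theorem hasDerivAt_one_sub_sqrt_one_sub_sq {u : ℝ} (hu : u ∈ Ioo (-1) 1) :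
    HasDerivAt (fun u => 1 - √(1 - u ^ 2)) (u / √(1 - u ^ 2)) u := by
  have hpos : 0 < 1 - u ^ 2 := by nlinarith [hu.1, hu.2]
  refine ((((hasDerivAt_pow 2 u).const_sub 1).sqrt hpos.ne').const_sub 1).congr_deriv ?_
  field_simp
  ring

theorem hasDerivAt_log_two_sub_binEntropy {u : ℝ} (hu : u ∈ Ioo (-1) 1) :
    HasDerivAt (fun u => log 2 - binEntropy ((1 - u) / 2)) (artanh u) u := by
  have h₀ : (1 - u) / 2 ≠ 0 := by linarith [hu.2]
  have h₁ : (1 - u) / 2 ≠ 1 := by linarith [hu.1]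
  refine (((hasDerivAt_binEntropy h₀ h₁).comp u
    (((hasDerivAt_id u).const_sub 1).div_const 2)).const_sub (log 2)).congr_deriv ?_
  have hp : (0 : ℝ) < 1 + u := by linarith [hu.1]
  have hm : (0 : ℝ) < 1 - u := by linarith [hu.2]
  rw [artanh_eq_half_log (Ioo_subset_Icc_self hu), log_div hp.ne' hm.ne',
    show 1 - (1 - u) / 2 = (1 + u) / 2 by ring, log_div hp.ne' two_ne_zero,
    log_div hm.ne' two_ne_zero]
  ring

def alphaOfBias (u : ℝ) : ℝ :=
  (1 - √(1 - u ^ 2)) / (2 * (log 2 - binEntropy ((1 - u) / 2)))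

theorem monotoneOn_alphaOfBias : MonotoneOn alphaOfBias (Ioc 0 1) := by
  refine monotoneOn_div_of_monotoneOn_deriv_div (f' := fun u => u / √(1 - u ^ 2))
    (g' := fun u => 2 * artanh u) (by fun_prop) (by fun_prop)
    (fun u hu => hasDerivAt_one_sub_sqrt_one_sub_sq ⟨by linarith [hu.1], hu.2⟩)
    (fun u hu => (hasDerivAt_log_two_sub_binEntropy ⟨by linarith [hu.1], hu.2⟩).const_mul 2)
    (fun u hu => mul_pos two_pos (artanh_pos hu)) (by simp) (by simp) ?_
  have hsinh : MonotoneOn (fun u => sinh (artanh u) / artanh u / 2) (Ioo 0 1) :=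
    fun x hx y hy hxy => div_le_div_of_nonneg_right (monotoneOn_sinh_div_self (artanh_pos hx)
      (artanh_pos hy) (artanh_le_artanh (by linarith [hx.1]) hy.2 hxy)) two_pos.le
  refine hsinh.congr fun u hu => ?_
  simp only [sinh_artanh ⟨by linarith [hu.1], hu.2⟩]
  field_simp

theorem binEnt_eq_binEntropy : binEnt = binEntropy := by
  ext s
  simp only [binEnt, binEntropy, log_inv]
  ring

theorem surjOn_binEntropy : SurjOn binEntropy (Icc 0 2⁻¹) (Icc 0 (log 2)) := by
  have h := intermediate_value_Icc (by norm_num : (0 : ℝ) ≤ 2⁻¹)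
    binEntropy_continuous.continuousOn
  rw [binEntropy_zero, binEntropy_two_inv] at h
  exact h

theorem binEntInv_eq_invFunOn : binEntInv = Function.invFunOn binEntropy (Icc 0 2⁻¹) := by
  ext y
  rw [binEntInv, binEnt_eq_binEntropy, one_div]

theorem mapsTo_binEntInv : MapsTo binEntInv (Icc 0 (log 2)) (Icc 0 2⁻¹) :=
  binEntInv_eq_invFunOn ▸ surjOn_binEntropy.mapsTo_invFunOn

theorem binEntropy_binEntInv {y : ℝ} (hy : y ∈ Icc 0 (log 2)) : binEntropy (binEntInv y) = y :=
  binEntInv_eq_invFunOn ▸ surjOn_binEntropy.rightInvOn_invFunOn hy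

theorem monotoneOn_binEntInv : MonotoneOn binEntInv (Icc 0 (log 2)) := fun y hy z hz hyz =>
  (binEntropy_strictMonoOn.le_iff_le (mapsTo_binEntInv hy) (mapsTo_binEntInv hz)).1
    (by rwa [binEntropy_binEntInv hy, binEntropy_binEntInv hz])

theorem log_two_sub_mem_Icc {ξ : ℝ} (hξ : ξ ∈ Ioc 0 (log 2)) :
    log 2 - ξ ∈ Icc 0 (log 2) :=
  ⟨sub_nonneg.2 hξ.2, sub_le_self _ hξ.1.le⟩

theorem binEntInv_log_two_sub_mem_Ico {ξ : ℝ} (hξ : ξ ∈ Ioc 0 (log 2)) :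
    binEntInv (log 2 - ξ) ∈ Ico 0 2⁻¹ := by
  have hy := log_two_sub_mem_Icc hξ
  refine ⟨(mapsTo_binEntInv hy).1, (mapsTo_binEntInv hy).2.lt_of_ne fun h => ?_⟩
  have := binEntropy_binEntInv hy
  rw [h, binEntropy_two_inv] at this
  linarith [hξ.1]

theorem alphaF_eq_alphaOfBias {ξ : ℝ} (hξ : ξ ∈ Ioc 0 (log 2)) :
    alphaF ξ = alphaOfBias (1 - 2 * binEntInv (log 2 - ξ)) := by
  have hy := log_two_sub_mem_Icc hξ
  have hs := binEntropy_binEntInv hy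
  set s := binEntInv (log 2 - ξ)
  have hsqrt : √(1 - (1 - 2 * s) ^ 2) = 2 * √(s * (1 - s)) := by
    rw [show 1 - (1 - 2 * s) ^ 2 = 2 ^ 2 * (s * (1 - s)) by ring, sqrt_mul (by positivity),
      sqrt_sq two_pos.le]
  rw [alphaF, if_neg hξ.1.ne', phiF, alphaOfBias, hsqrt,
    show (1 - (1 - 2 * s)) / 2 = s by ring, hs]
  field_simp
  ring

/-- `α(ξ) = φ(ξ)/ξ` is monotone increasing on `(0, ln 2]` (Lemma 4 of the paper). -/
theorem alpha_monotone : MonotoneOn alphaF (Set.Ioc 0 (Real.log 2)) := by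
  have hbias : MonotoneOn (fun ξ => 1 - 2 * binEntInv (log 2 - ξ)) (Ioc 0 (log 2)) :=
    fun ξ hξ η hη hξη => by
      have := monotoneOn_binEntInv (log_two_sub_mem_Icc hη) (log_two_sub_mem_Icc hξ)
        (sub_le_sub_left hξη _)
      linarith
  have hmaps : MapsTo (fun ξ => 1 - 2 * binEntInv (log 2 - ξ)) (Ioc 0 (log 2)) (Ioc 0 1) :=
    fun ξ hξ => by
      obtain ⟨hs₀, hs₁⟩ := binEntInv_log_two_sub_mem_Ico hξ
      exact ⟨by linarith, by linarith⟩
  exact (monotoneOn_alphaOfBias.comp hbias hmaps).congr fun ξ hξ =>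
    (alphaF_eq_alphaOfBias hξ).symm

end
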